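/- arXiv:2210.09089 — 2 statements merged into one kernel-verified Lean document; each statement's English description precedes it below -/
import Mathlib

section
/- (Block saddle point injectivity for multiple eigenvalues) Let A, M be symmetric n×n real matrices, M positive definite, λ₀ an eigenvalue of the pencil (A, M) whose eigenspace is exactly span{u₁,…,u_m} with u_iᵀMu_j = δ_{ij}. Let U = [u₁ … u_m] ∈ ℝ^{n×m}. If (w, η) ∈ ℝⁿ × ℝ^m satisfies (A − λ₀M)w = M U η and UᵀMw = 0, then w = 0 and η = 0. -/
open Matrix

/-!
Since `(A - λ₀M)U = 0` and `A - λ₀M` is symmetric, `Uᵀ(A - λ₀M) = 0`; and `UᵀMU = I` makes `Uᵀ`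
a left inverse of `MU`. Applying `Uᵀ` to `(A - λ₀M)w = MUη` therefore gives `η = 0`, so `w` lies in
the eigenspace, `w = Uc`, and then `c = UᵀMUc = UᵀMw = 0`.
-/

namespace Matrix

variable {R : Type*} [CommSemiring R] {k l m : Type*} [Fintype l]

theorem mul_eq_zero_of_forall_mulVec_mulVec_eq_zero [Fintype m] {B : Matrix k l R}
    {U : Matrix l m R} (h : ∀ c, B *ᵥ (U *ᵥ c) = 0) : B * U = 0 :=
  ext_iff_mulVec.2 fun c => by rw [← mulVec_mulVec, h, zero_mulVec]

theorem transpose_mulVec_mulVec_eq_zero_of_isSymm {B : Matrix l l R} {U : Matrix l m R}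
    (hB : B.IsSymm) (hBU : B * U = 0) (w : l → R) : Uᵀ *ᵥ (B *ᵥ w) = 0 := by
  rw [mulVec_mulVec, ← hB.eq, ← transpose_mul, hBU, transpose_zero, zero_mulVec]

theorem transpose_mulVec_mulVec_mulVec_eq_self [Fintype m] [DecidableEq m] {M : Matrix l l R}
    {U : Matrix l m R} (hU : Uᵀ * M * U = 1) (c : m → R) : Uᵀ *ᵥ (M *ᵥ (U *ᵥ c)) = c := by
  rw [mulVec_mulVec, mulVec_mulVec, hU, one_mulVec]

end Matrix

theorem stmt11_general {n m : ℕ} (A M : Matrix (Fin n) (Fin n) ℝ)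
    (hA : A.IsSymm) (hM : M.IsSymm)
    (lam₀ : ℝ) (U : Matrix (Fin n) (Fin m) ℝ)
    (hker : ∀ v, (A - lam₀ • M) *ᵥ v = 0 ↔ ∃ c : Fin m → ℝ, v = U *ᵥ c)
    (hortho : Uᵀ * M * U = (1 : Matrix (Fin m) (Fin m) ℝ))
    (w : Fin n → ℝ) (η : Fin m → ℝ)
    (hw : (A - lam₀ • M) *ᵥ w = M *ᵥ (U *ᵥ η))
    (horth : Uᵀ *ᵥ (M *ᵥ w) = 0) :
    w = 0 ∧ η = 0 := by
  have hBU : (A - lam₀ • M) * U = 0 :=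
    mul_eq_zero_of_forall_mulVec_mulVec_eq_zero fun c => (hker _).2 ⟨c, rfl⟩
  have hη : η = 0 := by
    rw [← transpose_mulVec_mulVec_mulVec_eq_self hortho η, ← hw,
      transpose_mulVec_mulVec_eq_zero_of_isSymm (hA.sub (hM.smul lam₀)) hBU]
  obtain ⟨c, rfl⟩ := (hker w).1 (by rw [hw, hη, mulVec_zero, mulVec_zero])
  have hc : c = 0 := by rw [← transpose_mulVec_mulVec_mulVec_eq_self hortho c, horth]
  exact ⟨by rw [hc, mulVec_zero], hη⟩

/-- Block saddle point injectivity for a multiple eigenvalue: if the eigenspace of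
the symmetric pencil `(A,M)` at `λ₀` is exactly the column span of `U` with
`UᵀMU = I`, and `(A − λ₀M)w = MUη`, `UᵀMw = 0`, then `w = 0` and `η = 0`. -/
theorem stmt11 {n m : ℕ} (A M : Matrix (Fin n) (Fin n) ℝ)
    (hA : A.IsSymm) (hM : M.IsSymm) (hMpos : M.PosDef)
    (lam₀ : ℝ) (U : Matrix (Fin n) (Fin m) ℝ)
    (hker : ∀ v, (A - lam₀ • M) *ᵥ v = 0 ↔ ∃ c : Fin m → ℝ, v = U *ᵥ c)
    (hortho : Uᵀ * M * U = (1 : Matrix (Fin m) (Fin m) ℝ))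
    (w : Fin n → ℝ) (η : Fin m → ℝ)
    (hw : (A - lam₀ • M) *ᵥ w = M *ᵥ (U *ᵥ η))
    (horth : Uᵀ *ᵥ (M *ᵥ w) = 0) :
    w = 0 ∧ η = 0 :=
  stmt11_general A M hA hM lam₀ U hker hortho w η hw horth
end

section
/- (First order eigenvalue derivative formula for multiple eigenvalues, finite-dimensional version) Let A(t), M(t) be differentiable families of symmetric n×n real matrices with M(t) positive definite. Suppose U(t) ∈ ℝ^{n×m} and Λ(t) ∈ ℝ^{m×m} are differentiable with A(t)U(t) = M(t)U(t)Λ(t), U(t)ᵀM(t)U(t) = I_m, and Λ(0) = λ₀I_m. Then Λ'(0) = U(0)ᵀA'(0)U(0) − λ₀·U(0)ᵀM'(0)U(0). -/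
/-!
Differentiate `A U = M U Λ` at `0` and multiply on the left by `U(0)ᵀ`. Because `A(0)`
and `M(0)` are symmetric and `Λ(0) = λ₀ I`, transposing the eigen-equation at `0` gives
`U(0)ᵀ A(0) = λ₀ U(0)ᵀ M(0)`, so the two terms containing the unknown `U'(0)` cancel, while
`U(0)ᵀ M(0) U(0) = I` isolates `Λ'(0)`.
-/

open Matrix

theorem HasDerivAt.matrix_mul_apply {𝕜 : Type*} [NontriviallyNormedField 𝕜]
    {l m n : Type*} [Fintype m] {f : 𝕜 → Matrix l m 𝕜} {g : 𝕜 → Matrix m n 𝕜}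
    {f' : Matrix l m 𝕜} {g' : Matrix m n 𝕜} {x : 𝕜}
    (hf : ∀ i j, HasDerivAt (fun t => f t i j) (f' i j) x)
    (hg : ∀ i j, HasDerivAt (fun t => g t i j) (g' i j) x) (i : l) (k : n) :
    HasDerivAt (fun t => (f t * g t) i k) ((f' * g x + f x * g') i k) x := by
  simpa only [mul_apply, Matrix.add_apply, Finset.sum_add_distrib] using
    HasDerivAt.fun_sum fun j _ => HasDerivAt.fun_mul (hf i j) (hg j k)

theorem Matrix.entrywise_hasDerivAt_unique {𝕜 : Type*} [NontriviallyNormedField 𝕜]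
    {m n : Type*} {f : 𝕜 → Matrix m n 𝕜} {f₁' f₂' : Matrix m n 𝕜} {x : 𝕜}
    (h₁ : ∀ i j, HasDerivAt (fun t => f t i j) (f₁' i j) x)
    (h₂ : ∀ i j, HasDerivAt (fun t => f t i j) (f₂' i j) x) : f₁' = f₂' :=
  Matrix.ext fun i j => (h₁ i j).unique (h₂ i j)

theorem Matrix.eigenvalue_deriv_of_linearized {R : Type*} [CommRing R]
    {m n : Type*} [Fintype m] [Fintype n] [DecidableEq m]
    {A₀ M₀ A' M' : Matrix n n R} {U₀ U' : Matrix n m R} {Λ' : Matrix m m R} {lam₀ : R}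
    (hA : A₀.IsSymm) (hM : M₀.IsSymm) (heig : A₀ * U₀ = lam₀ • (M₀ * U₀))
    (hortho : U₀ᵀ * M₀ * U₀ = 1)
    (hlin : A' * U₀ + A₀ * U' =
      (M' * U₀ + M₀ * U') * (lam₀ • (1 : Matrix m m R)) + M₀ * U₀ * Λ') :
    Λ' = U₀ᵀ * A' * U₀ - lam₀ • (U₀ᵀ * M' * U₀) := by
  have hleft : U₀ᵀ * A₀ = lam₀ • (U₀ᵀ * M₀) := by
    simpa only [transpose_mul, transpose_smul, hA.eq, hM.eq] using congrArg transpose heig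
  calc Λ'
    _ = U₀ᵀ * (M₀ * U₀ * Λ') := by
      rw [← Matrix.mul_assoc, ← Matrix.mul_assoc, hortho, Matrix.one_mul]
    _ = U₀ᵀ * (A' * U₀ + A₀ * U' - lam₀ • (M' * U₀ + M₀ * U')) := by
      rw [hlin, Matrix.mul_smul, Matrix.mul_one, add_sub_cancel_left]
    _ = U₀ᵀ * A' * U₀ - lam₀ • (U₀ᵀ * M' * U₀) := by
      simp only [Matrix.mul_add, Matrix.mul_sub, Matrix.mul_smul, ← Matrix.mul_assoc, hleft,
        Matrix.smul_mul, smul_add]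
      abel

theorem stmt12_general {n m : ℕ}
    (A M : ℝ → Matrix (Fin n) (Fin n) ℝ)
    (U : ℝ → Matrix (Fin n) (Fin m) ℝ) (Λ : ℝ → Matrix (Fin m) (Fin m) ℝ)
    (A' M' : Matrix (Fin n) (Fin n) ℝ) (U' : Matrix (Fin n) (Fin m) ℝ)
    (Λ' : Matrix (Fin m) (Fin m) ℝ) (lam₀ : ℝ)
    (hA : ∀ i j, HasDerivAt (fun t => A t i j) (A' i j) 0)
    (hM : ∀ i j, HasDerivAt (fun t => M t i j) (M' i j) 0)
    (hU : ∀ i j, HasDerivAt (fun t => U t i j) (U' i j) 0)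
    (hΛ : ∀ i j, HasDerivAt (fun t => Λ t i j) (Λ' i j) 0)
    (hAsymm : ∀ t, (A t).IsSymm) (hMsymm : ∀ t, (M t).IsSymm)
    (heig : ∀ t, A t * U t = M t * U t * Λ t)
    (hortho : ∀ t, (U t)ᵀ * M t * U t = (1 : Matrix (Fin m) (Fin m) ℝ))
    (hΛ0 : Λ 0 = lam₀ • (1 : Matrix (Fin m) (Fin m) ℝ)) :
    Λ' = (U 0)ᵀ * A' * U 0 - lam₀ • ((U 0)ᵀ * M' * U 0) := by
  have hlin : A' * U 0 + A 0 * U' = (M' * U 0 + M 0 * U') * Λ 0 + M 0 * U 0 * Λ' := by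
    refine Matrix.entrywise_hasDerivAt_unique (HasDerivAt.matrix_mul_apply hA hU) ?_
    simpa only [heig] using HasDerivAt.matrix_mul_apply (HasDerivAt.matrix_mul_apply hM hU) hΛ
  have heig0 : A 0 * U 0 = lam₀ • (M 0 * U 0) := by
    rw [heig 0, hΛ0, Matrix.mul_smul, Matrix.mul_one]
  rw [hΛ0] at hlin
  exact Matrix.eigenvalue_deriv_of_linearized (hAsymm 0) (hMsymm 0) heig0 (hortho 0) hlin

/-- First order derivative formula for a degenerate eigenvalue of multiplicity `m`:
if `A(t)U(t) = M(t)U(t)Λ(t)`, `U(t)ᵀM(t)U(t) = I`, and `Λ(0) = λ₀I`, then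
`Λ'(0) = U(0)ᵀA'(0)U(0) − λ₀ U(0)ᵀM'(0)U(0)`. -/
theorem stmt12 {n m : ℕ}
    (A M : ℝ → Matrix (Fin n) (Fin n) ℝ)
    (U : ℝ → Matrix (Fin n) (Fin m) ℝ) (Λ : ℝ → Matrix (Fin m) (Fin m) ℝ)
    (A' M' : Matrix (Fin n) (Fin n) ℝ) (U' : Matrix (Fin n) (Fin m) ℝ)
    (Λ' : Matrix (Fin m) (Fin m) ℝ) (lam₀ : ℝ)
    (hA : ∀ i j, HasDerivAt (fun t => A t i j) (A' i j) 0)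
    (hM : ∀ i j, HasDerivAt (fun t => M t i j) (M' i j) 0)
    (hU : ∀ i j, HasDerivAt (fun t => U t i j) (U' i j) 0)
    (hΛ : ∀ i j, HasDerivAt (fun t => Λ t i j) (Λ' i j) 0)
    (hAsymm : ∀ t, (A t).IsSymm) (hMsymm : ∀ t, (M t).IsSymm)
    (hMpos : ∀ t, (M t).PosDef)
    (heig : ∀ t, A t * U t = M t * U t * Λ t)
    (hortho : ∀ t, (U t)ᵀ * M t * U t = (1 : Matrix (Fin m) (Fin m) ℝ))
    (hΛ0 : Λ 0 = lam₀ • (1 : Matrix (Fin m) (Fin m) ℝ)) :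
    Λ' = (U 0)ᵀ * A' * U 0 - lam₀ • ((U 0)ᵀ * M' * U 0) :=
  stmt12_general A M U Λ A' M' U' Λ' lam₀ hA hM hU hΛ hAsymm hMsymm heig hortho hΛ0
end
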